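/- arXiv:1209.3419 — 4 statements merged into one kernel-verified Lean document; each statement's English description precedes it below -/
import Mathlib

section
/- If a hypergraph H is acyclic (has a join tree), then H has generalized hypertree width at most 1; conversely, if ghw(H) = 1 then H has a join tree (acyclic hypergraphs are exactly those of generalized hypertree width 1). -/
/-!
A join tree is a generalized hypertree decomposition of width one: every hyperedge is a bag,
covered by itself.

Conversely, let `(T, χ, λ)` have width one, and write `e p` for the hyperedge of `λ(p)`. As
long as there are two hyperedges, the decomposition exposes an ear: a hyperedge `h` and a
hyperedge `c ≠ h` containing `h ∩ g` for every other hyperedge `g`. Look at a leaf `p` of `T`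
with neighbour `q`. If the bag of `p` meets the hyperedges only inside `e q`, fold it into the
bag of `q` and recurse on a smaller tree. Otherwise it holds a vertex lying in no other bag,
which forces `e p ⊆ χ p`; then either `e p` is an ear with witness `e q`, or another hyperedge
lies inside `e p`. Deleting an ear keeps a width-one decomposition (GYO reduction), and a join
tree of the remaining hyperedges extends to the whole hypergraph by hanging `h` below `c`.
-/

open SimpleGraph

/-- A tree decomposition of a graph `G`: a tree `T` with bags `χ` satisfying the
vertex-cover, edge-cover and connectedness conditions. -/
structure IsTreeDecomp {V ι : Type} (G : SimpleGraph V)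
    (T : SimpleGraph ι) (χ : ι → Finset V) : Prop where
  isTree : T.IsTree
  vertex_cover : ∀ v : V, ∃ p : ι, v ∈ χ p
  edge_cover : ∀ v w : V, G.Adj v w → ∃ p : ι, v ∈ χ p ∧ w ∈ χ p
  bags_connected : ∀ v : V, (T.induce {p : ι | v ∈ χ p}).Connected

/-- The treewidth of a graph: the minimum, over tree decompositions, of the
maximum bag size minus one. -/
noncomputable def treewidth {V : Type} (G : SimpleGraph V) : ℕ :=
  sInf { k | ∃ (ι : Type) (_i : Fintype ι) (T : SimpleGraph ι) (χ : ι → Finset V),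
    IsTreeDecomp G T χ ∧ (@Finset.univ ι _i).sup (fun p => (χ p).card) - 1 = k }

/-- The primal graph of a hypergraph with hyperedge set `E`: two distinct nodes are
adjacent iff they occur together in some hyperedge. -/
def primalH {V : Type} (E : Finset (Finset V)) : SimpleGraph V where
  Adj v w := v ≠ w ∧ ∃ h ∈ E, v ∈ h ∧ w ∈ h
  symm := by
    constructor
    rintro v w ⟨hne, h, hE, hv, hw⟩
    exact ⟨hne.symm, h, hE, hw, hv⟩
  loopless := by
    constructor
    rintro v ⟨hne, -⟩
    exact hne rfl

/-- A hypergraph (given by its hyperedge set `E`) has a join tree: a tree on its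
hyperedges such that for every node occurring in some hyperedge, the hyperedges
containing it induce a connected subtree. -/
def HasJoinTree {V : Type} (E : Finset (Finset V)) : Prop :=
  ∃ T : SimpleGraph {h // h ∈ E}, T.IsTree ∧
    ∀ v : V, (∃ h ∈ E, v ∈ h) →
      (T.induce {h : {h // h ∈ E} | v ∈ h.1}).Connected

/-- A generalized hypertree decomposition of the hypergraph with hyperedge set `E`:
a tree decomposition of the primal graph together with a labelling `lam` of tree
nodes by sets of hyperedges covering the bags. -/
structure IsGHD {V ι : Type} (E : Finset (Finset V))
    (T : SimpleGraph ι) (χ : ι → Finset V) (lam : ι → Finset (Finset V)) : Prop where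
  td : IsTreeDecomp (primalH E) T χ
  lam_sub : ∀ p : ι, lam p ⊆ E
  covers : ∀ p : ι, ∀ v ∈ χ p, ∃ h ∈ lam p, v ∈ h

/-- The generalized hypertree width: the minimum over generalized hypertree
decompositions of the maximum number of hyperedges used to cover a bag. -/
noncomputable def ghw {V : Type} (E : Finset (Finset V)) : ℕ :=
  sInf { k | ∃ (ι : Type) (_i : Fintype ι) (T : SimpleGraph ι) (χ : ι → Finset V)
    (lam : ι → Finset (Finset V)), IsGHD E T χ lam ∧
    (@Finset.univ ι _i).sup (fun p => (lam p).card) = k }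

namespace SimpleGraph

variable {V W : Type*} {G : SimpleGraph V}

lemma IsAcyclic.of_induce {s : Set V} (hs : G.support ⊆ s) (h : (G.induce s).IsAcyclic) :
    G.IsAcyclic := by
  intro u c hc
  have hcs : ∀ x ∈ c.support, x ∈ s := fun x hx =>
    hs (mem_support_of_mem_walk_support c hc.not_nil hx)
  refine h (c.induce s hcs) ?_
  rw [← Walk.isCycle_map_iff_of_injective (f := (Embedding.induce s).toHom) Subtype.val_injective,
    Walk.map_induce]
  exact hc

lemma IsAcyclic.map (f : V ↪ W) (h : G.IsAcyclic) : (G.map f).IsAcyclic := by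
  refine IsAcyclic.of_induce (s := Set.range f) ?_ ?_
  · rintro _ ⟨w, hw⟩
    obtain ⟨u, -, -, rfl, -⟩ := (map_adj f G _ w).mp hw
    exact ⟨u, rfl⟩
  · exact (Embedding.map f G).isoInduceRange.isAcyclic_iff.mp h

lemma Connected.induce_image {G' : SimpleGraph W} (f : G →g G') {s : Set V}
    (h : (G.induce s).Connected) : (G'.induce (f '' s)).Connected :=
  h.map (induceHom f (Set.mapsTo_image f s)) fun ⟨_, x, hx, rfl⟩ => ⟨⟨x, hx⟩, rfl⟩

lemma mem_of_connected_induce_of_leaf {S : Set V} (hS : (G.induce S).Connected) {p q x : V}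
    (hpq : G.Adj p q) (hp : (G.neighborSet p).Subsingleton) (hpS : p ∈ S) (hxS : x ∈ S)
    (hxp : x ≠ p) : q ∈ S := by
  obtain ⟨w⟩ := hS.preconnected ⟨x, hxS⟩ ⟨p, hpS⟩
  have hw : ¬ w.Nil := Walk.not_nil_of_ne fun h => hxp (congrArg Subtype.val h)
  have : w.penultimate.1 = q := hp (w.adj_penultimate hw).symm hpq
  exact this ▸ w.penultimate.2

lemma connected_induce_compl_leaf {p : V} (hp : (G.neighborSet p).Subsingleton) {S : Set V}
    (hS : (G.induce S).Connected) {s : Set ({p}ᶜ : Set V)} (hs : ∀ y, y ∈ s ↔ y.1 ∈ S)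
    (hne : s.Nonempty) : ((G.induce {p}ᶜ).induce s).Connected := by
  classical
  have := hne.to_subtype
  refine ⟨fun ⟨⟨a, hap⟩, has⟩ ⟨⟨b, hbp⟩, hbs⟩ => ?_⟩
  obtain ⟨w⟩ := hS.preconnected ⟨a, (hs _).mp has⟩ ⟨b, (hs _).mp hbs⟩
  let w' := (w.map (Embedding.induce S).toHom).bypass
  have hS' : ∀ x ∈ w'.support, x ∈ S := fun x hx => by
    have := Walk.support_bypass_subset_support _ hx
    rw [Walk.support_map] at this
    obtain ⟨y, -, rfl⟩ := List.mem_map.mp this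
    exact y.2
  have hp' : ∀ x ∈ w'.support, x ∈ ({p}ᶜ : Set V) := fun x hx hxp => by
    rw [Set.mem_singleton_iff] at hxp
    subst hxp
    exact (Walk.bypass_isPath _).isTrail.not_mem_support_of_subsingleton_neighborSet
      (fun h => hap h.symm) (fun h => hbp h.symm) hp hx
  exact ⟨(w'.induce _ hp').induce s fun y hy =>
    (hs y).mpr (hS' y (by rwa [Walk.support_induce, List.mem_attachWith] at hy))⟩

lemma IsTree.induce_compl_leaf (hG : G.IsTree) {p q : V} (hpq : G.Adj p q)
    (hp : (G.neighborSet p).Subsingleton) : (G.induce {p}ᶜ).IsTree := by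
  have : Nonempty ({p}ᶜ : Set V) := ⟨⟨q, hpq.ne'⟩⟩
  refine ⟨⟨hG.connected.preconnected.induce_of_degree_eq_one fun v hv => ?_⟩,
    hG.isAcyclic.induce _⟩
  obtain rfl : v = p := by simpa using hv
  exact hp

lemma IsTree.map_sup_edge (hG : G.IsTree) {φ : V ↪ W} {w : W} (hφ : Set.range φ = {w}ᶜ)
    (u : V) : (G.map φ ⊔ edge w (φ u)).IsTree := by
  have hne : w ≠ φ u := fun h => hφ.le ⟨u, h.symm⟩ rfl
  have hadj : (G.map φ ⊔ edge w (φ u)).Adj w (φ u) :=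
    Or.inr ((edge_adj _ _ _ _).2 ⟨Or.inl ⟨rfl, rfl⟩, hne⟩)
  refine ⟨(connected_iff_exists_forall_reachable _).2 ⟨φ u, fun a => ?_⟩, ?_⟩
  · by_cases ha : a = w
    · exact ha ▸ hadj.reachable.symm
    · obtain ⟨a', rfl⟩ : a ∈ Set.range φ := hφ ▸ ha
      exact ((hG.connected u a').map (Embedding.map φ G).toHom).mono le_sup_left
  · refine (hG.isAcyclic.map φ).sup_edge_of_not_reachable fun hr => ?_
    obtain ⟨_, hwx⟩ := mem_support_of_reachable hne hr
    obtain ⟨x, -, -, hx, -⟩ := (map_adj φ G _ _).1 hwx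
    exact hφ.le ⟨x, hx⟩ rfl

lemma Connected.induce_map_sup_edge {φ : V ↪ W} {w : W} (hφ : Set.range φ = {w}ᶜ) {u : V}
    {S : Set W} (hS : (G.induce (φ ⁻¹' S)).Connected) (hwS : w ∈ S → φ u ∈ S) :
    ((G.map φ ⊔ edge w (φ u)).induce S).Connected := by
  let f : G →g G.map φ ⊔ edge w (φ u) :=
    (Hom.ofLE le_sup_left).comp (Embedding.map φ G).toHom
  have himage : f '' (φ ⁻¹' S) = S \ {w} := by
    rw [show ⇑f = φ from rfl, Set.image_preimage_eq_inter_range, hφ, Set.sdiff_eq]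
  have hS' := hS.induce_image f
  rw [himage] at hS'
  by_cases hw : w ∈ S
  · have hne : w ≠ φ u := fun h => hφ.le ⟨u, h.symm⟩ rfl
    rw [← Set.insert_eq_of_mem hw, ← Set.insert_sdiff_singleton, Set.insert_eq]
    exact connected_induce_union .of_subsingleton hS'.preconnected rfl ⟨hwS hw, hne.symm⟩
      (Or.inr ((edge_adj _ _ _ _).2 ⟨Or.inl ⟨rfl, rfl⟩, hne⟩))
  · rwa [Set.sdiff_singleton_eq_self hw] at hS'

end SimpleGraph

open Finset

section TreeDecomposition

variable {V ι : Type} {E : Finset (Finset V)} {T : SimpleGraph ι} {χ : ι → Finset V}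

lemma primalH_mono {E' : Finset (Finset V)} (hE : E' ⊆ E) : primalH E' ≤ primalH E :=
  fun _ _ ⟨hne, g, hg, hv, hw⟩ => ⟨hne, g, hE hg, hv, hw⟩

lemma IsTreeDecomp.mono {G G' : SimpleGraph V} (hG : G' ≤ G) (hd : IsTreeDecomp G T χ) :
    IsTreeDecomp G' T χ :=
  ⟨hd.isTree, hd.vertex_cover, fun v w hvw => hd.edge_cover v w (hG hvw), hd.bags_connected⟩

lemma IsTreeDecomp.forall_mem_eq_of_leaf {G : SimpleGraph V} (hd : IsTreeDecomp G T χ) {p q : ι}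
    (hpq : T.Adj p q) (hp : (T.neighborSet p).Subsingleton) {v : V} (hvp : v ∈ χ p)
    (hvq : v ∉ χ q) : ∀ x, v ∈ χ x → x = p := fun x hvx => by
  by_contra hxp
  exact hvq (mem_of_connected_induce_of_leaf (hd.bags_connected v) hpq hp hvp hvx hxp)

lemma IsTreeDecomp.subset_of_forall_mem_eq (hd : IsTreeDecomp (primalH E) T χ) {v : V} {p : ι}
    (hv : ∀ x, v ∈ χ x → x = p) {g : Finset V} (hg : g ∈ E) (hvg : v ∈ g) :
    g ⊆ χ p := by
  intro w hwg
  by_cases hvw : v = w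
  · obtain ⟨x, hvx⟩ := hd.vertex_cover v
    exact hvw ▸ hv x hvx ▸ hvx
  · obtain ⟨x, hvx, hwx⟩ := hd.edge_cover v w ⟨hvw, g, hg, hvg, hwg⟩
    exact hv x hvx ▸ hwx

end TreeDecomposition

section JoinTree

variable {V : Type} {E : Finset (Finset V)} {h c : Finset V}

lemma hasJoinTree_singleton (g : Finset V) : HasJoinTree {g} := by
  refine ⟨⊥, .of_subsingleton, fun v ⟨_, hg, hv⟩ => ?_⟩
  have : Nonempty {x : {x // x ∈ ({g} : Finset (Finset V))} | v ∈ x.1} :=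
    ⟨⟨⟨_, hg⟩, hv⟩⟩
  exact .of_subsingleton

variable [DecidableEq V]

structure IsEar (E : Finset (Finset V)) (h c : Finset V) : Prop where
  mem : h ∈ E
  witness_mem : c ∈ E
  witness_ne : c ≠ h
  inter_subset : ∀ g ∈ E, g ≠ h → h ∩ g ⊆ c

lemma IsEar.of_subset (hh : h ∈ E) (hc : c ∈ E) (hne : h ≠ c) (hsub : h ⊆ c) :
    IsEar E h c :=
  ⟨hh, hc, hne.symm, fun _ _ _ => inter_subset_left.trans hsub⟩

theorem HasJoinTree.of_erase_ear (hJ : HasJoinTree (E.erase h)) (hear : IsEar E h c) :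
    HasJoinTree E := by
  obtain ⟨J, hJ, hJbags⟩ := hJ
  let φ : {g // g ∈ E.erase h} ↪ {g // g ∈ E} :=
    Subtype.impEmbedding _ _ fun _ => mem_of_mem_erase
  let ear : {g // g ∈ E} := ⟨h, hear.mem⟩
  have hφ : Set.range φ = {ear}ᶜ := by
    ext a
    refine ⟨fun ⟨a', ha'⟩ ha => (mem_erase.1 a'.2).1 (congrArg Subtype.val (ha'.trans ha)),
      fun ha => ⟨⟨a.1, mem_erase.2 ⟨fun h' => ha (Subtype.ext h'), a.2⟩⟩, rfl⟩⟩
  let witness : {g // g ∈ E.erase h} :=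
    ⟨c, mem_erase.2 ⟨hear.witness_ne, hear.witness_mem⟩⟩
  refine ⟨_, hJ.map_sup_edge hφ witness, fun v ⟨g, hg, hvg⟩ => ?_⟩
  by_cases hv : ∃ g ∈ E.erase h, v ∈ g
  · obtain ⟨g', hg', hvg'⟩ := hv
    refine (hJbags v ⟨g', hg', hvg'⟩).induce_map_sup_edge (S := {a | v ∈ a.1}) hφ fun hvh =>
      hear.inter_subset g' (mem_of_mem_erase hg') (mem_erase.1 hg').1 (mem_inter.2 ⟨hvh, hvg'⟩)
  · push Not at hv
    have hS : {a : {g // g ∈ E} | v ∈ a.1} = {ear} := by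
      ext a
      refine ⟨fun hva => by_contra fun ha => ?_, fun ha => ?_⟩
      · exact hv a.1 (mem_erase.2 ⟨fun h' => ha (Subtype.ext h'), a.2⟩) hva
      · obtain rfl : g = h := by_contra fun hgh => hv g (mem_erase.2 ⟨hgh, hg⟩) hvg
        exact ha ▸ hvg
    rw [hS]
    exact .of_subsingleton

end JoinTree

section WidthOne

variable {V ι : Type} [DecidableEq V] {E : Finset (Finset V)} {T : SimpleGraph ι}
  {χ e : ι → Finset V}

/-- A generalized hypertree decomposition of width one, `e p` being the hyperedge of `λ(p)`.
Bags need to lie in `e p` only where they meet hyperedges, so that the notion survives the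
removal of an ear, whose private vertices stay in the bags. -/
structure IsWidthOneDecomp (E : Finset (Finset V)) (T : SimpleGraph ι) (χ e : ι → Finset V) :
    Prop extends IsTreeDecomp (primalH E) T χ where
  mem : ∀ p, e p ∈ E
  inter_subset : ∀ p, ∀ g ∈ E, χ p ∩ g ⊆ e p

lemma IsWidthOneDecomp.subset_of_subset_bag (hd : IsWidthOneDecomp E T χ e) {g : Finset V}
    (hg : g ∈ E) {p : ι} (hgp : g ⊆ χ p) : g ⊆ e p :=
  fun _ hv => hd.inter_subset p g hg (mem_inter.2 ⟨hgp hv, hv⟩)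

lemma IsWidthOneDecomp.erase_ear {h c : Finset V} (hd : IsWidthOneDecomp E T χ e)
    (hear : IsEar E h c) :
    IsWidthOneDecomp (E.erase h) T χ (fun p => if e p = h then c else e p) where
  toIsTreeDecomp := hd.toIsTreeDecomp.mono (primalH_mono (erase_subset h E))
  mem p := by
    split_ifs with hp
    · exact mem_erase.2 ⟨hear.witness_ne, hear.witness_mem⟩
    · exact mem_erase.2 ⟨hp, hd.mem p⟩
  inter_subset p g hg := by
    obtain ⟨hgh, hgE⟩ := mem_erase.1 hg
    split_ifs with hp
    · exact (subset_inter (hd.inter_subset p g hgE) inter_subset_right).trans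
        (hp ▸ hear.inter_subset g hgE hgh)
    · exact hd.inter_subset p g hgE

lemma IsWidthOneDecomp.induce_compl_leaf [DecidableEq ι] (hd : IsWidthOneDecomp E T χ e)
    {p q : ι} (hpq : T.Adj p q) (hp : (T.neighborSet p).Subsingleton)
    (hχp : ∀ g ∈ E, χ p ∩ g ⊆ e q) :
    IsWidthOneDecomp E (T.induce {p}ᶜ) (fun y => if y.1 = q then χ q ∪ χ p else χ y)
      (fun y => e y) := by
  set χ' : ({p}ᶜ : Set ι) → Finset V := fun y => if y.1 = q then χ q ∪ χ p else χ y
  have hsub : ∀ x, ∃ y, χ x ⊆ χ' y := fun x => by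
    by_cases hxp : x = p
    · exact ⟨⟨q, hpq.ne'⟩, by simp [χ', hxp]⟩
    · refine ⟨⟨x, hxp⟩, ?_⟩
      by_cases hxq : x = q <;> simp [χ', hxq]
  have hcover : ∀ v, ∃ y, v ∈ χ' y := fun v => by
    obtain ⟨x, hx⟩ := hd.vertex_cover v
    obtain ⟨y, hy⟩ := hsub x
    exact ⟨y, hy hx⟩
  refine ⟨⟨hd.isTree.induce_compl_leaf hpq hp, hcover, fun v w hvw => ?_, fun v => ?_⟩,
    fun y => hd.mem y, fun y g hg => ?_⟩
  · obtain ⟨x, hvx, hwx⟩ := hd.edge_cover v w hvw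
    obtain ⟨y, hy⟩ := hsub x
    exact ⟨y, hy hvx, hy hwx⟩
  · by_cases hvp : v ∈ χ p
    · have hS : (T.induce ({x | v ∈ χ x} ∪ {p, q})).Connected :=
        induce_union_connected (hd.bags_connected v).preconnected
          (induce_pair_connected_of_adj hpq).preconnected ⟨p, hvp, by simp⟩
      refine connected_induce_compl_leaf hp hS (fun y => ?_) (hcover v)
      by_cases hyq : y.1 = q <;> simp [χ', hyq, hvp]
    · refine connected_induce_compl_leaf hp (hd.bags_connected v) (fun y => ?_) (hcover v)
      by_cases hyq : y.1 = q <;> simp [χ', hyq, hvp]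
  · by_cases hyq : y.1 = q
    · simp only [χ', hyq, if_true, union_inter_distrib_right]
      exact union_subset (hd.inter_subset q g hg) (hχp g hg)
    · simpa [χ', hyq] using hd.inter_subset y g hg

theorem IsWidthOneDecomp.exists_isEar [Finite ι] (hd : IsWidthOneDecomp E T χ e)
    (hE : 1 < #E) : ∃ h c, IsEar E h c := by
  classical
  induction ι using Finite.induction_subsingleton_or_nontrivial with
  | hbase ι =>
    obtain ⟨p⟩ := hd.isTree.connected.nonempty
    obtain ⟨g, hg, hgp⟩ := exists_mem_ne hE (e p)
    refine ⟨g, e p, .of_subset hg (hd.mem p) hgp (hd.subset_of_subset_bag hg fun v hv => ?_)⟩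
    exact hd.subset_of_forall_mem_eq (fun x _ => Subsingleton.elim x p) hg hv hv
  | hstep ι ih =>
    have := Fintype.ofFinite ι
    obtain ⟨p, hdeg⟩ := hd.isTree.exists_vert_degree_one_of_nontrivial
    obtain ⟨q, hpq, hq⟩ := degree_eq_one_iff_existsUnique_adj.mp hdeg
    have hp : (T.neighborSet p).Subsingleton := fun a ha b hb => (hq a ha).trans (hq b hb).symm
    by_cases hχp : ∀ g ∈ E, χ p ∩ g ⊆ e q
    · exact ih _ (Finite.card_subtype_lt (x := p) (by simp)) (hd.induce_compl_leaf hpq hp hχp)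
    push Not at hχp
    obtain ⟨g, hg, hgq⟩ := hχp
    obtain ⟨v, hv, hvq⟩ := not_subset.1 hgq
    have hprivate : ∀ w ∈ χ p, w ∉ e q → ∀ g ∈ E, w ∈ g → g ⊆ χ p := by
      intro w hwp hwq g hg hwg
      have hwq' : w ∉ χ q := fun h => hwq (hd.inter_subset q g hg (mem_inter.2 ⟨h, hwg⟩))
      exact hd.subset_of_forall_mem_eq (hd.forall_mem_eq_of_leaf hpq hp hwp hwq') hg hwg
    have hvp : v ∈ e p := hd.inter_subset p g hg hv
    have hep : e p ⊆ χ p := hprivate v (mem_inter.1 hv).1 hvq (e p) (hd.mem p) hvp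
    by_cases hear : ∀ g' ∈ E, g' ≠ e p → e p ∩ g' ⊆ e q
    · exact ⟨e p, e q, hd.mem p, hd.mem q, fun h => hvq (h ▸ hvp), hear⟩
    push Not at hear
    obtain ⟨g', hg', hne, hg'q⟩ := hear
    obtain ⟨w, hw, hwq⟩ := not_subset.1 hg'q
    obtain ⟨hwp, hwg'⟩ := mem_inter.1 hw
    exact ⟨g', e p, .of_subset hg' (hd.mem p) hne
      (hd.subset_of_subset_bag hg' (hprivate w (hep hwp) hwq g' hg' hwg'))⟩

theorem IsWidthOneDecomp.hasJoinTree [Finite ι] (hd : IsWidthOneDecomp E T χ e) :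
    HasJoinTree E := by
  induction E using Finset.strongInduction generalizing e with
  | H E ih =>
  by_cases hE : 1 < #E
  · obtain ⟨h, c, hear⟩ := hd.exists_isEar hE
    exact (ih _ (erase_ssubset hear.mem) (hd.erase_ear hear)).of_erase_ear hear
  · obtain ⟨p⟩ := hd.isTree.connected.nonempty
    have hEp : E = {e p} := eq_singleton_iff_unique_mem.2
      ⟨hd.mem p, fun g hg => card_le_one.1 (not_lt.1 hE) g hg _ (hd.mem p)⟩
    exact hEp ▸ hasJoinTree_singleton (e p)

end WidthOne

section GeneralizedHypertreeWidth

variable {V : Type} {E : Finset (Finset V)}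

lemma HasJoinTree.ghw_le_one (hcov : ∀ v : V, ∃ h ∈ E, v ∈ h) (hJ : HasJoinTree E) :
    ghw E ≤ 1 := by
  obtain ⟨T, hT, hbags⟩ := hJ
  have := hT.connected.nonempty
  have hGHD : IsGHD E T Subtype.val fun g => {g.1} :=
    { td :=
        { isTree := hT
          vertex_cover := fun v => let ⟨g, hg, hv⟩ := hcov v; ⟨⟨g, hg⟩, hv⟩
          edge_cover := fun _ _ ⟨_, g, hg, hv, hw⟩ => ⟨⟨g, hg⟩, hv, hw⟩
          bags_connected := fun v => hbags v (hcov v) }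
      lam_sub := fun g => singleton_subset_iff.2 g.2
      covers := fun g _ hv => ⟨g.1, mem_singleton_self _, hv⟩ }
  refine Nat.sInf_le ⟨_, inferInstance, T, _, _, hGHD, ?_⟩
  simp only [card_singleton]
  exact sup_const univ_nonempty 1

lemma IsGHD.exists_isWidthOneDecomp [DecidableEq V] {ι : Type} {T : SimpleGraph ι}
    {χ : ι → Finset V} {lam : ι → Finset (Finset V)} (hG : IsGHD E T χ lam)
    (hlam : ∀ p, #(lam p) ≤ 1)
    (hE : E.Nonempty) : ∃ e, IsWidthOneDecomp E T χ e := by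
  have : ∀ p, ∃ g ∈ E, χ p ⊆ g := fun p => by
    obtain hp | ⟨g, hg⟩ := (lam p).eq_empty_or_nonempty
    · obtain ⟨g, hg⟩ := hE
      refine ⟨g, hg, fun v hv => ?_⟩
      obtain ⟨_, hh, -⟩ := hG.covers p v hv
      simp [hp] at hh
    · refine ⟨g, hG.lam_sub p hg, fun v hv => ?_⟩
      obtain ⟨g', hg', hvg'⟩ := hG.covers p v hv
      exact card_le_one.1 (hlam p) g' hg' g hg ▸ hvg'
  choose e he using this
  exact ⟨e, hG.td, fun p => (he p).1, fun p _ _ => inter_subset_left.trans (he p).2⟩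

lemma exists_isWidthOneDecomp_of_ghw_eq_one [DecidableEq V] (h : ghw E = 1) :
    ∃ (ι : Type) (_ : Finite ι) (T : SimpleGraph ι) (χ e : ι → Finset V),
      IsWidthOneDecomp E T χ e := by
  unfold ghw at h
  have hmem := Nat.sInf_mem (Nat.nonempty_of_pos_sInf (h ▸ one_pos))
  rw [h] at hmem
  obtain ⟨ι, _, T, χ, lam, hG, hsup⟩ := hmem
  have := hG.td.isTree.connected.nonempty
  obtain ⟨p, -, hp⟩ := exists_mem_eq_sup univ univ_nonempty fun p => #(lam p)
  obtain ⟨g, hg⟩ := card_eq_one.1 (hsup ▸ hp).symm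
  obtain ⟨e, he⟩ := hG.exists_isWidthOneDecomp
    (fun q => hsup ▸ le_sup (f := fun p => #(lam p)) (mem_univ q))
    ⟨g, hG.lam_sub p (hg ▸ mem_singleton_self g)⟩
  exact ⟨ι, inferInstance, T, χ, e, he⟩

end GeneralizedHypertreeWidth

theorem hasJoinTree_iff_ghw_eq_one_general {V : Type} (E : Finset (Finset V))
    (hcov : ∀ v : V, ∃ h ∈ E, v ∈ h) :
    (HasJoinTree E → ghw E ≤ 1) ∧ (ghw E = 1 → HasJoinTree E) := by
  classical
  refine ⟨HasJoinTree.ghw_le_one hcov, fun h => ?_⟩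
  obtain ⟨ι, _, T, χ, e, hd⟩ := exists_isWidthOneDecomp_of_ghw_eq_one h
  exact hd.hasJoinTree

/-- Acyclic hypergraphs are exactly those of generalized hypertree
width 1: a hypergraph with a join tree has `ghw ≤ 1`, and conversely a hypergraph
with `ghw = 1` has a join tree. (All nodes are assumed to occur in some hyperedge.) -/
theorem hasJoinTree_iff_ghw_eq_one {V : Type} [Fintype V] (E : Finset (Finset V))
    (hcov : ∀ v : V, ∃ h ∈ E, v ∈ h) :
    (HasJoinTree E → ghw E ≤ 1) ∧ (ghw E = 1 → HasJoinTree E) :=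
  hasJoinTree_iff_ghw_eq_one_general E hcov
end

section
/- Deciding whether an assignment exists violating at most m constraints is NP-hard even for CSP instances with acyclic constraint hypergraphs: given any CSP instance I = (Var, U, C), the instance I' = (Var, U, C ∪ {(Var, ∅)}) has an acyclic hypergraph, is unsatisfiable, and admits an assignment violating exactly one constraint if and only if I is satisfiable. -/
open SimpleGraph

/-- A CSP instance over variables `Var`, domain `U`, with constraints indexed by `ι`:
each constraint has a scope and a relation (a set of tuples, represented as total
assignments whose values matter only on the scope). -/
structure CSP (Var U ι : Type) where
  scope : ι → Finset Var
  rel : ι → Set (Var → U)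

/-- `θ` is a solution: its restriction to every constraint scope belongs to the
corresponding relation. -/
def CSP.Sol {Var U ι : Type} (P : CSP Var U ι) (θ : Var → U) : Prop :=
  ∀ c : ι, ∃ t ∈ P.rel c, ∀ x ∈ P.scope c, θ x = t x

/-- The primal graph of a CSP instance: two distinct variables are adjacent iff
they occur together in some constraint scope. -/
def CSP.primalG {Var U ι : Type} (P : CSP Var U ι) : SimpleGraph Var where
  Adj v w := v ≠ w ∧ ∃ c : ι, v ∈ P.scope c ∧ w ∈ P.scope c
  symm := by
    constructor
    rintro v w ⟨hne, c, hv, hw⟩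
    exact ⟨hne.symm, c, hw, hv⟩
  loopless := by
    constructor
    rintro v ⟨hne, -⟩
    exact hne rfl

/-- The violation degree of an assignment: the number of constraints it violates. -/
noncomputable def violation {Var U ι : Type} (P : CSP Var U ι) (θ : Var → U) : ℕ :=
  Set.ncard { c : ι | ¬ ∃ t ∈ P.rel c, ∀ x ∈ P.scope c, θ x = t x }

/-! The added constraint `(Var, ∅)` is violated by every assignment, and the other
constraints of `P'` are those of `P`, so `δ_{P'} = δ_P + 1`: an assignment violates exactly
one constraint of `P'` iff it solves `P`. Its scope contains every other scope, so the star
centred at it is a join tree. -/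

lemma SimpleGraph.connected_induce_starGraph {V : Type} {r : V} {s : Set V} (hr : r ∈ s) :
    ((starGraph r).induce s).Connected :=
  .of_isUniversal (v := ⟨r, hr⟩) fun w hw => by
    simpa [Subtype.ext_iff] using hw

theorem hasJoinTree_of_forall_subset {V : Type} {E : Finset (Finset V)} {e : Finset V}
    (he : e ∈ E) (hsub : ∀ h ∈ E, h ⊆ e) : HasJoinTree E :=
  ⟨starGraph ⟨e, he⟩, isTree_starGraph _, fun _ ⟨h, hE, hv⟩ =>
    connected_induce_starGraph (hsub h hE hv)⟩

namespace CSP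

variable {Var U ι : Type} (P : CSP Var U ι) (θ : Var → U)

def violated : Set ι :=
  {c | ¬ ∃ t ∈ P.rel c, ∀ x ∈ P.scope c, θ x = t x}

lemma violation_eq_ncard_violated : violation P θ = (P.violated θ).ncard := rfl

lemma violated_eq_empty_iff_sol : P.violated θ = ∅ ↔ P.Sol θ := by
  simp [violated, Set.eq_empty_iff_forall_notMem, Sol]

lemma violation_eq_zero_iff_sol [Finite ι] : violation P θ = 0 ↔ P.Sol θ := by
  rw [violation_eq_ncard_violated, Set.ncard_eq_zero, violated_eq_empty_iff_sol]

variable {P θ}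

lemma mem_violated_of_rel_eq_empty {c : ι} (h : P.rel c = ∅) : c ∈ P.violated θ := by
  simp [violated, h]

lemma not_sol_of_rel_eq_empty {c : ι} (h : P.rel c = ∅) : ¬ P.Sol θ := fun hθ => by
  obtain ⟨t, ht, -⟩ := hθ c
  simp [h] at ht

lemma violated_add_unsat_constraint {P' : CSP Var U (ι ⊕ Unit)}
    (hscope : ∀ c, P'.scope (.inl c) = P.scope c) (hrel : ∀ c, P'.rel (.inl c) = P.rel c)
    (hunsat : P'.rel (.inr ()) = ∅) :
    P'.violated θ = insert (.inr ()) (.inl '' P.violated θ) := by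
  ext (c | ⟨⟩)
  · simp [violated, hscope, hrel]
  · simpa using mem_violated_of_rel_eq_empty hunsat

lemma violation_add_unsat_constraint [Finite ι] {P' : CSP Var U (ι ⊕ Unit)}
    (hscope : ∀ c, P'.scope (.inl c) = P.scope c) (hrel : ∀ c, P'.rel (.inl c) = P.rel c)
    (hunsat : P'.rel (.inr ()) = ∅) :
    violation P' θ = violation P θ + 1 := by
  rw [violation_eq_ncard_violated, violated_add_unsat_constraint hscope hrel hunsat,
    Set.ncard_insert_of_notMem (by simp), Set.ncard_image_of_injective _ Sum.inl_injective,
    violation_eq_ncard_violated]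

end CSP

/-- The reduction showing Min-violation is NP-hard on acyclic
hypergraphs: adding to any CSP `P` the constraint `(Var, ∅)` (over all variables,
with empty relation) yields an instance `P'` whose hypergraph is acyclic, which is
unsatisfiable, and which admits an assignment violating exactly one constraint iff
`P` is satisfiable. -/
theorem min_violation_reduction {Var U ι : Type} [Fintype Var] [DecidableEq Var]
    [Fintype ι] (P : CSP Var U ι) (P' : CSP Var U (ι ⊕ Unit))
    (hscope : ∀ c : ι, P'.scope (Sum.inl c) = P.scope c)
    (hrel : ∀ c : ι, P'.rel (Sum.inl c) = P.rel c)
    (hbig_scope : P'.scope (Sum.inr ()) = Finset.univ)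
    (hbig_rel : P'.rel (Sum.inr ()) = ∅) :
    HasJoinTree (Finset.univ.image P'.scope) ∧
    (¬ ∃ θ : Var → U, P'.Sol θ) ∧
    ((∃ θ : Var → U, violation P' θ = 1) ↔ ∃ θ : Var → U, P.Sol θ) := by
  refine ⟨?_, fun ⟨_, hθ⟩ => CSP.not_sol_of_rel_eq_empty hbig_rel hθ, ?_⟩
  · exact hasJoinTree_of_forall_subset
      (Finset.mem_image.2 ⟨.inr (), Finset.mem_univ _, hbig_scope⟩)
      fun _ _ => Finset.subset_univ _
  · refine exists_congr fun θ => ?_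
    rw [CSP.violation_add_unsat_constraint hscope hrel hbig_rel, ← CSP.violation_eq_zero_iff_sol]
    omega
end

section
/- Let P be a Max-CSP instance and (T,χ) a tree decomposition of the incidence graph of H(P). In the transformation to the CSOP instance (P', w') — where scope-variables S_i take value u_t for a tuple t ∈ r_i conforming with the assignment of the ordinary variables in the bag, or the value 'unsat' if no such tuple exists, and w' assigns cost 1 to 'unsat' values and 0 otherwise — the minimum cost of a solution of P' equals the minimum violation degree min_θ δ(θ) over all assignments θ of P. -/
/-!
An assignment `θ` lifts to a solution of `P'` of cost exactly `δ(θ)`: give `S_c` a conforming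
tuple when there is one and `unsat` otherwise. Conversely, every `x ∈ S_c` shares a bag with
`S_c`, so a value `u_t ≠ unsat` of `S_c` conforms with the ordinary variables on all of `S_c`;
hence the ordinary part of a solution violates only constraints whose scope-variable is
`unsat`, and its violation degree is at most the cost.
-/

open SimpleGraph

/-- The incidence graph of a CSP instance: the bipartite graph on variables and
constraints, with `x` adjacent to `c` iff `x` occurs in the scope of `c`. -/
def CSP.incidenceG {Var U ι : Type} (P : CSP Var U ι) : SimpleGraph (Var ⊕ ι) where
  Adj a b :=
    (∃ x c, a = Sum.inl x ∧ b = Sum.inr c ∧ x ∈ P.scope c) ∨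
    (∃ x c, a = Sum.inr c ∧ b = Sum.inl x ∧ x ∈ P.scope c)
  symm := by
    constructor
    rintro a b (⟨x, c, rfl, rfl, hm⟩ | ⟨x, c, rfl, rfl, hm⟩)
    · exact Or.inr ⟨x, c, rfl, rfl, hm⟩
    · exact Or.inl ⟨x, c, rfl, rfl, hm⟩
  loopless := by
    constructor
    rintro a (⟨x, c, rfl, hab, -⟩ | ⟨x, c, rfl, hab, -⟩) <;> simp at hab

/-- The unit cost of a value of the transformed CSOP instance: the value `unsat`
(encoded `Sum.inr none`) costs 1, every other value costs 0. -/
def unsatCost {U T : Type} : U ⊕ Option T → ℕ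
  | Sum.inr none => 1
  | _ => 0

/-- Solutions of the CSOP instance obtained from a Max-CSP `P` via a tree
decomposition `(T,χ)` of its incidence graph: in every bag, ordinary variables
take values in `U`, and each scope-variable `S_c` in the bag takes either the
encoding `u_t` of a tuple `t ∈ r_c` conforming with the ordinary variables of the
bag, or the value `unsat`. -/
def IncSolPred {Var U ι ιT : Type} (P : CSP Var U ι) (χ : ιT → Finset (Var ⊕ ι))
    (θ' : Var ⊕ ι → U ⊕ Option (Var → U)) : Prop :=
  ∀ p : ιT,
    (∀ x : Var, Sum.inl x ∈ χ p → ∃ u : U, θ' (Sum.inl x) = Sum.inl u) ∧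
    (∀ c : ι, Sum.inr c ∈ χ p →
      (θ' (Sum.inr c) = Sum.inr none ∨
        ∃ t ∈ P.rel c, θ' (Sum.inr c) = Sum.inr (some t) ∧
          ∀ x ∈ P.scope c, Sum.inl x ∈ χ p → θ' (Sum.inl x) = Sum.inl (t x)))

open Finset

namespace CSP

variable {Var U ι : Type} (P : CSP Var U ι)

def Satisfies (θ : Var → U) (c : ι) : Prop :=
  ∃ t ∈ P.rel c, ∀ x ∈ P.scope c, θ x = t x

open scoped Classical in
theorem violation_eq_card [Fintype ι] (θ : Var → U) :
    violation P θ = #{c | ¬ P.Satisfies θ c} := by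
  rw [violation, Set.ncard_eq_toFinset_card']
  congr 1
  ext c
  simp [Satisfies]

open scoped Classical in
noncomputable def incLift (θ : Var → U) : Var ⊕ ι → U ⊕ Option (Var → U)
  | Sum.inl x => Sum.inl (θ x)
  | Sum.inr c => if h : P.Satisfies θ c then Sum.inr (some h.choose) else Sum.inr none

theorem incLift_inr_eq_none_iff (θ : Var → U) (c : ι) :
    P.incLift θ (Sum.inr c) = Sum.inr none ↔ ¬ P.Satisfies θ c := by
  by_cases h : P.Satisfies θ c <;> simp [incLift, h]

theorem incSolPred_incLift {ιT : Type} (χ : ιT → Finset (Var ⊕ ι)) (θ : Var → U) :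
    IncSolPred P χ (P.incLift θ) := by
  refine fun _ => ⟨fun x _ => ⟨θ x, rfl⟩, fun c _ => ?_⟩
  by_cases h : P.Satisfies θ c
  · obtain ⟨ht, hconf⟩ := h.choose_spec
    exact Or.inr ⟨h.choose, ht, by simp [incLift, h],
      fun x hx _ => by simp [incLift, hconf x hx]⟩
  · exact Or.inl ((P.incLift_inr_eq_none_iff θ c).2 h)

end CSP

theorem sum_unsatCost_eq_card {α U T : Type} [Fintype α] (f : α → U ⊕ Option T)
    [DecidablePred fun a => f a = Sum.inr none] :
    ∑ a, unsatCost (f a) = #{a | f a = Sum.inr none} := by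
  rw [card_filter]
  refine sum_congr rfl fun a _ => ?_
  split_ifs with h
  · rw [h]; rfl
  · generalize f a = v at h
    rcases v with _ | _ | _ <;> simp_all [unsatCost]

section Transformation

variable {Var U ι ιT : Type} {P : CSP Var U ι} {χ : ιT → Finset (Var ⊕ ι)}

open scoped Classical in
theorem sum_unsatCost_incLift [Fintype Var] [Fintype ι] (θ : Var → U) :
    ∑ X : Var ⊕ ι, unsatCost (P.incLift θ X) = violation P θ := by
  have hinl : ∑ x : Var, unsatCost (P.incLift θ (Sum.inl x)) = 0 :=
    sum_eq_zero fun _ _ => rfl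
  rw [Fintype.sum_sum_type, hinl, zero_add, sum_unsatCost_eq_card, P.violation_eq_card]
  simp only [CSP.incLift_inr_eq_none_iff]

theorem IncSolPred.satisfies_of_ne_none {T : SimpleGraph ιT}
    {θ' : Var ⊕ ι → U ⊕ Option (Var → U)} (hθ' : IncSolPred P χ θ')
    (hTD : IsTreeDecomp P.incidenceG T χ) {θ : Var → U}
    (hθ : ∀ x, θ' (Sum.inl x) = Sum.inl (θ x)) {c : ι}
    (hc : θ' (Sum.inr c) ≠ Sum.inr none) : P.Satisfies θ c := by
  obtain ⟨p, hp⟩ := hTD.vertex_cover (Sum.inr c)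
  obtain ⟨t, ht, hct, -⟩ := ((hθ' p).2 c hp).resolve_left hc
  refine ⟨t, ht, fun x hx => ?_⟩
  obtain ⟨q, hxq, hcq⟩ :=
    hTD.edge_cover (Sum.inl x) (Sum.inr c) (Or.inl ⟨x, c, rfl, rfl, hx⟩)
  obtain ⟨t', -, hct', hconf⟩ := ((hθ' q).2 c hcq).resolve_left hc
  obtain rfl : t' = t := by simpa [hct] using hct'.symm
  simpa [hθ x] using hconf x hx hxq

theorem IncSolPred.exists_violation_le [Fintype Var] [Fintype ι] {T : SimpleGraph ιT}
    {θ' : Var ⊕ ι → U ⊕ Option (Var → U)} (hθ' : IncSolPred P χ θ')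
    (hTD : IsTreeDecomp P.incidenceG T χ) :
    ∃ θ : Var → U, violation P θ ≤ ∑ X, unsatCost (θ' X) := by
  classical
  have hinl (x : Var) : ∃ u, θ' (Sum.inl x) = Sum.inl u := by
    obtain ⟨p, hp⟩ := hTD.vertex_cover (Sum.inl x)
    exact (hθ' p).1 x hp
  choose θ hθ using hinl
  refine ⟨θ, ?_⟩
  calc violation P θ = #{c | ¬ P.Satisfies θ c} := P.violation_eq_card θ
    _ ≤ #{c | θ' (Sum.inr c) = Sum.inr none} :=
      card_le_card <| monotone_filter_right _ fun _ _ hc =>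
        Classical.byContradiction fun hne => hc (hθ'.satisfies_of_ne_none hTD hθ hne)
    _ = ∑ c, unsatCost (θ' (Sum.inr c)) := (sum_unsatCost_eq_card _).symm
    _ ≤ ∑ X, unsatCost (θ' X) := by
      rw [Fintype.sum_sum_type]
      exact Nat.le_add_left _ _

end Transformation

/-- For a Max-CSP instance `P` and a tree decomposition `(T,χ)` of
the incidence graph of its hypergraph, the minimum cost of a solution of the
transformed CSOP instance `P'` (cost 1 for each `unsat` value) equals the minimum
violation degree over all assignments of `P`. -/
theorem maxcsp_incidence_min_cost {Var U ι ιT : Type} [Fintype Var] [Fintype ι]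
    (P : CSP Var U ι) (T : SimpleGraph ιT) (χ : ιT → Finset (Var ⊕ ι))
    (hTD : IsTreeDecomp P.incidenceG T χ) :
    sInf { n : ℕ | ∃ θ' : Var ⊕ ι → U ⊕ Option (Var → U),
        IncSolPred P χ θ' ∧ (∑ X : Var ⊕ ι, unsatCost (θ' X)) = n }
      = sInf { n : ℕ | ∃ θ : Var → U, violation P θ = n } := by
  apply csInf_eq_csInf_of_forall_exists_le
  · rintro _ ⟨θ', hθ', rfl⟩
    obtain ⟨θ, hθ⟩ := hθ'.exists_violation_le hTD
    exact ⟨_, ⟨θ, rfl⟩, hθ⟩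
  · rintro _ ⟨θ, rfl⟩
    exact ⟨_, ⟨P.incLift θ, P.incSolPred_incLift χ θ, sum_unsatCost_incLift θ⟩, le_rfl⟩
end

section
/- If the hypergraph of a CSP instance P is acyclic with join tree T, and after performing the bottom-up semijoin pass along T (removing from each parent relation the tuples not conforming with any tuple of each child relation) the relation at the root of T is nonempty, then P has a solution. Conversely, if P has a solution, the root relation after the bottom-up pass is nonempty. -/
open SimpleGraph

/-- `c` is a child of `v` in the tree `T` rooted at `ρ`: they are adjacent and `v`
lies on every path from the root `ρ` to `c`. -/
def IsChild {ι : Type} (T : SimpleGraph ι) (ρ v c : ι) : Prop :=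
  T.Adj v c ∧ ∀ w : T.Walk ρ c, w.IsPath → v ∈ w.support


/-!
Orient the join tree `T` away from the root `ρ`; every non-root node `c` then has exactly one
parent `v`, the penultimate vertex of the tree path from `ρ` to `c`.

If `R ρ` is nonempty, choose surviving tuples top-down: a tuple of `R v` conforms with a surviving
tuple of each child. Neighbouring tuples then agree on their shared variables, and since the
constraints containing a variable `x` form a connected subtree, all chosen tuples give `x` the same
value; reading each variable off any constraint containing it yields a solution.

Conversely, the restrictions of a solution survive the pass, by induction from the leaves up, which
is possible because `T` is finite.
-/

theorem SimpleGraph.Reachable.eq_of_forall_adj {V β : Type*} {G : SimpleGraph V} {f : V → β}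
    (hf : ∀ v w, G.Adj v w → f v = f w) {u v : V} (huv : G.Reachable u v) : f u = f v := by
  obtain ⟨p⟩ := huv
  induction p with
  | nil => rfl
  | cons hadj _ ih => exact (hf _ _ hadj).trans ih

section RootedTree

variable {V : Type} {T : SimpleGraph V} {ρ v c : V}

theorem IsChild.ne_root (h : IsChild T ρ v c) : c ≠ ρ := by
  rintro rfl
  have hv : v = c := by simpa using h.2 .nil .nil
  exact h.1.ne hv

theorem IsChild.eq_penultimate (hT : T.IsAcyclic) (h : IsChild T ρ v c) {p : T.Walk ρ c}
    (hp : p.IsPath) : v = p.penultimate :=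
  hT.eq_penultimate_of_adj_end hp h.1.symm (h.2 p hp)

theorem IsChild.parent_unique (hT : T.IsTree) {v' : V} (h : IsChild T ρ v c)
    (h' : IsChild T ρ v' c) : v = v' := by
  obtain ⟨p, hp, -⟩ := hT.existsUnique_path ρ c
  rw [h.eq_penultimate hT.isAcyclic hp, h'.eq_penultimate hT.isAcyclic hp]

theorem IsChild.dist_lt (hT : T.Connected) (h : IsChild T ρ v c) : T.dist ρ v < T.dist ρ c := by
  classical
  obtain ⟨p, hp, hlen⟩ := hT.exists_path_of_dist ρ c
  have hv := h.2 p hp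
  calc T.dist ρ v ≤ (p.takeUntil v hv).length := dist_le _
    _ < p.length := p.length_takeUntil_lt_length hv h.1.ne
    _ = T.dist ρ c := hlen

theorem exists_isChild_of_ne_root (hT : T.IsTree) (hc : c ≠ ρ) : ∃ v, IsChild T ρ v c := by
  obtain ⟨p, -, hpu⟩ := hT.existsUnique_path ρ c
  refine ⟨p.penultimate, p.adj_penultimate (Walk.not_nil_of_ne hc.symm), fun w hw => ?_⟩
  rw [hpu w hw]
  exact p.getVert_mem_support _

theorem isChild_or_isChild_of_adj (hT : T.IsTree) {a b : V} (hab : T.Adj a b) :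
    IsChild T ρ a b ∨ IsChild T ρ b a := by
  obtain ⟨p, hp, hpu⟩ := hT.existsUnique_path ρ a
  obtain ⟨q, hq, hqu⟩ := hT.existsUnique_path ρ b
  by_cases ha : a ∈ q.support
  · exact .inl ⟨hab, fun w hw => hqu w hw ▸ ha⟩
  · exact .inr ⟨hab.symm, fun w hw => hpu w hw ▸
      hT.isAcyclic.mem_support_of_ne_mem_support_of_adj_of_isPath hp hq hab ha⟩

theorem wellFounded_isChild (hT : T.Connected) : WellFounded (IsChild T ρ) :=
  (InvImage.wf (T.dist ρ) wellFounded_lt).mono fun _ _ h => h.dist_lt hT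

theorem wellFounded_flip_isChild [Finite V] (hT : T.Connected) :
    WellFounded (flip (IsChild T ρ)) :=
  (Finite.wellFounded_of_trans_of_irrefl (InvImage (· > ·) (T.dist ρ))).mono
    fun _ _ h => h.dist_lt hT

theorem exists_family_compatible_of_isChild {α : Type*} (hT : T.IsTree) {S : V → α → Prop}
    {E : V → V → α → α → Prop} {a₀ : α} (h₀ : S ρ a₀)
    (hstep : ∀ v c a, IsChild T ρ v c → S v a → ∃ b, S c b ∧ E v c a b) :
    ∃ t : V → α, (∀ v, S v (t v)) ∧ ∀ v c, IsChild T ρ v c → E v c (t v) (t c) := by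
  classical
  choose par hpar using fun c (hc : c ≠ ρ) => exists_isChild_of_ne_root (ρ := ρ) hT hc
  -- With the hypotheses under the `∃`, `choose` yields a total step function `g`, so `t` can be
  -- defined by plain well-founded recursion.
  have hstep' : ∀ v c a, ∃ b, IsChild T ρ v c → S v a → S c b ∧ E v c a b := fun v c a => by
    by_cases h : IsChild T ρ v c ∧ S v a
    · obtain ⟨b, hb⟩ := hstep v c a h.1 h.2
      exact ⟨b, fun _ _ => hb⟩
    · exact ⟨a, fun h₁ h₂ => (h ⟨h₁, h₂⟩).elim⟩
  choose g hg using hstep'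
  have wf := wellFounded_isChild (ρ := ρ) hT.connected
  let t : V → α := wf.fix fun c IH => if hc : c = ρ then a₀ else g (par c hc) c (IH _ (hpar c hc))
  have hfix : ∀ c, t c = if hc : c = ρ then a₀ else g (par c hc) c (t (par c hc)) :=
    fun c => wf.fix_eq _ c
  have ht_root : t ρ = a₀ := by
    rw [hfix, dif_pos rfl]
  have ht : ∀ c (hc : c ≠ ρ), t c = g (par c hc) c (t (par c hc)) := fun c hc => by
    rw [hfix, dif_neg hc]
  have hS : ∀ v, S v (t v) := fun v => wf.induction (C := fun v => S v (t v)) v fun c IH => by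
    by_cases hc : c = ρ
    · exact hc ▸ ht_root ▸ h₀
    · rw [ht c hc]
      exact (hg _ _ _ (hpar c hc) (IH _ (hpar c hc))).1
  refine ⟨t, hS, fun v c h => ?_⟩
  rw [ht c h.ne_root, (hpar c h.ne_root).parent_unique hT h]
  exact (hg v c (t v) h (hS v)).2

end RootedTree

section CSP

variable {Var U ι : Type} (P : CSP Var U ι)

theorem CSP.exists_sol_of_agree [Nonempty ι] (t : ι → Var → U) (hrel : ∀ c, t c ∈ P.rel c)
    (hagree : ∀ c d x, x ∈ P.scope c → x ∈ P.scope d → t c x = t d x) : ∃ θ, P.Sol θ :=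
  ⟨fun x => t (Classical.epsilon fun c => x ∈ P.scope c) x, fun c => ⟨t c, hrel c, fun x hx =>
    hagree _ _ x (Classical.epsilon_spec (p := fun c => x ∈ P.scope c) ⟨c, hx⟩) hx⟩⟩

theorem CSP.agree_of_joinTree {T : SimpleGraph ι}
    (hJT : ∀ x : Var, (∃ c : ι, x ∈ P.scope c) → (T.induce {c : ι | x ∈ P.scope c}).Connected)
    {t : ι → Var → U} (hadj : ∀ a b, T.Adj a b → ∀ x ∈ P.scope a, x ∈ P.scope b → t a x = t b x)
    (c d : ι) (x : Var) (hc : x ∈ P.scope c) (hd : x ∈ P.scope d) : t c x = t d x :=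
  ((hJT x ⟨c, hc⟩).preconnected ⟨c, hc⟩ ⟨d, hd⟩).eq_of_forall_adj
    (f := fun e : {e // x ∈ P.scope e} => t e x) fun a b hab => hadj a b hab x a.2 b.2

theorem CSP.exists_mem_bottomUp_of_sol [DecidableEq Var] [Finite ι] {T : SimpleGraph ι}
    (hT : T.Connected) {ρ : ι} {R : ι → Set (Var → U)}
    (hR : ∀ v : ι, R v = { t | t ∈ P.rel v ∧ ∀ c : ι, IsChild T ρ v c →
        ∃ t' ∈ R c, ∀ x ∈ P.scope v ∩ P.scope c, t x = t' x })
    {θ : Var → U} (hθ : P.Sol θ) (v : ι) : ∃ t ∈ R v, ∀ x ∈ P.scope v, θ x = t x := by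
  induction v using (wellFounded_flip_isChild (ρ := ρ) hT).induction with | _ v IH
  obtain ⟨t, ht, hθt⟩ := hθ v
  refine ⟨t, ?_, hθt⟩
  rw [hR v]
  refine ⟨ht, fun c hc => ?_⟩
  obtain ⟨t', ht', hθt'⟩ := IH c hc
  refine ⟨t', ht', fun x hx => ?_⟩
  rw [Finset.mem_inter] at hx
  rw [← hθt x hx.1, hθt' x hx.2]

end CSP

theorem bottomUp_semijoin_correct_general {Var U ι : Type} [DecidableEq Var]
    [Fintype ι] (P : CSP Var U ι)
    (T : SimpleGraph ι) (hT : T.IsTree)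
    (hJT : ∀ x : Var, (∃ c : ι, x ∈ P.scope c) →
      (T.induce {c : ι | x ∈ P.scope c}).Connected)
    (ρ : ι) (R : ι → Set (Var → U))
    (hR : ∀ v : ι, R v = { t | t ∈ P.rel v ∧ ∀ c : ι, IsChild T ρ v c →
        ∃ t' ∈ R c, ∀ x ∈ P.scope v ∩ P.scope c, t x = t' x }) :
    (R ρ).Nonempty ↔ ∃ θ : Var → U, P.Sol θ := by
  constructor
  · rintro ⟨t₀, ht₀⟩
    obtain ⟨t, htR, hchild⟩ := exists_family_compatible_of_isChild hT ht₀
      (E := fun v c t t' => ∀ x ∈ P.scope v ∩ P.scope c, t x = t' x)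
      fun v c t hc ht => (hR v ▸ ht).2 c hc
    have hadj : ∀ a b, T.Adj a b → ∀ x ∈ P.scope a, x ∈ P.scope b → t a x = t b x := by
      intro a b hab x ha hb
      rcases isChild_or_isChild_of_adj (ρ := ρ) hT hab with h | h
      · exact hchild a b h x (Finset.mem_inter.2 ⟨ha, hb⟩)
      · exact (hchild b a h x (Finset.mem_inter.2 ⟨hb, ha⟩)).symm
    have : Nonempty ι := ⟨ρ⟩
    exact P.exists_sol_of_agree t (fun v => (hR v ▸ htR v).1) (P.agree_of_joinTree hJT hadj)
  · rintro ⟨θ, hθ⟩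
    obtain ⟨t, ht, -⟩ := P.exists_mem_bottomUp_of_sol hT.connected hR hθ ρ
    exact ⟨t, ht⟩

/-- Correctness of the bottom-up semijoin pass on a join tree of an
acyclic CSP instance. `R` is the family of reduced relations: `R v` keeps exactly
the tuples of `r_v` conforming with some surviving tuple of each child relation.
Then the reduced relation at the root `ρ` is nonempty iff `P` has a solution. -/
theorem bottomUp_semijoin_correct {Var U ι : Type} [Fintype Var] [DecidableEq Var]
    [Fintype ι] (P : CSP Var U ι)
    (T : SimpleGraph ι) (hT : T.IsTree)
    (hJT : ∀ x : Var, (∃ c : ι, x ∈ P.scope c) →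
      (T.induce {c : ι | x ∈ P.scope c}).Connected)
    (ρ : ι) (R : ι → Set (Var → U))
    (hR : ∀ v : ι, R v = { t | t ∈ P.rel v ∧ ∀ c : ι, IsChild T ρ v c →
        ∃ t' ∈ R c, ∀ x ∈ P.scope v ∩ P.scope c, t x = t' x }) :
    (R ρ).Nonempty ↔ ∃ θ : Var → U, P.Sol θ :=
  bottomUp_semijoin_correct_general P T hT hJT ρ R hR
end
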